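/- For each 0<δ<1 let ψ_δ:ℝ→[0,1/(2δ)] be a continuous function with ψ_δ(s) = 1/(2δ) for |s| ≤ δ − δ² and ψ_δ(s) = 0 for |s| ≥ δ + δ², and set ψ_{r,δ}(s) = ψ_δ(s−r). Let J be a continuously differentiable function with compact support in (0,∞). Then there exists a finite constant C₀, depending only on J, such that for all sufficiently small δ > 0: limsup_{T→∞} sup_{η ∈ {0,1}^{ℤ²}} | ∫₀^∞ J(r) μ^{1,T}(η)(dr) − ∫₀^∞ J(r) ( ∫ ψ_{r,δ} dμ^{1,T}(η) ) dr | ≤ C₀ δ. -/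

import Mathlib

/-!
Put `g(s) = ∫ J(r) ψ(s - r) dr`. If `J` vanishes beyond `b`, then, as `δ + δ² < 2`, every function
integrated against `μ^{1,T}` vanishes beyond `b + 2`, so these integrals are finite sums over points
of sup-norm at most `T^{b+2}`; hence the `r`-integral commutes with `μ^{1,T}`, and the difference to
estimate is `∫ (J - g) dμ^{1,T}`. As `ψ` has mass `1 ± δ` and width `δ + δ²`, `|J - g| ≤ (M + 4K)δ`
for `|J| ≤ M` and `J` `K`-Lipschitz. Finally the shell of sup-radius `k` has `8k` points, so
`Σ_{0 < |x|_∞ ≤ N} |x|⁻² ≤ 8 (1 + log N)`, and the total `μ^{1,T}`-mass of `[0, b + 2]` is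
`O(b + 3)` uniformly in `η`.
-/

open MeasureTheory Set Filter
open scoped Classical

noncomputable section

/-- Square of the Euclidean norm of a point of `ℤ²`. -/
def nsq (x : ℤ × ℤ) : ℝ := ((x.1 : ℝ)) ^ 2 + ((x.2 : ℝ)) ^ 2

/-- Euclidean norm of a point of `ℤ²`. -/
def enorm2 (x : ℤ × ℤ) : ℝ := Real.sqrt (nsq x)

/-- `σ_T(x) = log |x| / log T`. -/
def sig (T : ℝ) (x : ℤ × ℤ) : ℝ := Real.log (enorm2 x) / Real.log T

/-- Integral of `f` against the polar empirical measure `μ^{1,T}(η)`: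
`(1/(2π log T)) Σ_{x ≠ 0} η(x) f(σ_T(x)) / |x|²`. -/
def polarInt (T : ℝ) (η : ℤ × ℤ → ℝ) (f : ℝ → ℝ) : ℝ :=
  (1 / (2 * Real.pi * Real.log T)) *
    ∑' x : ℤ × ℤ, if x ≠ 0 then η x * f (sig T x) / nsq x else 0

open scoped Finset

def supNorm (x : ℤ × ℤ) : ℕ := max x.1.natAbs x.2.natAbs

def supBall (N : ℕ) : Finset (ℤ × ℤ) :=
  Finset.Icc (-(N : ℤ)) N ×ˢ Finset.Icc (-(N : ℤ)) N

lemma mem_supBall {N : ℕ} {x : ℤ × ℤ} : x ∈ supBall N ↔ supNorm x ≤ N := by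
  simp only [supBall, supNorm, Finset.mem_product, Finset.mem_Icc]
  omega

lemma nsq_nonneg (x : ℤ × ℤ) : 0 ≤ nsq x := by
  unfold nsq
  positivity

lemma supNorm_sq_le_nsq (x : ℤ × ℤ) : (supNorm x : ℝ) ^ 2 ≤ nsq x := by
  have h : (supNorm x : ℝ) = max |(x.1 : ℝ)| |(x.2 : ℝ)| := by
    simp [supNorm, Nat.cast_natAbs]
  rw [h, nsq]
  rcases max_choice |(x.1 : ℝ)| |(x.2 : ℝ)| with h | h <;> rw [h, sq_abs] <;> nlinarith

lemma supNorm_le_enorm2 (x : ℤ × ℤ) : (supNorm x : ℝ) ≤ enorm2 x :=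
  (Real.le_sqrt (by positivity) (nsq_nonneg x)).2 (supNorm_sq_le_nsq x)

lemma inv_nsq_le_inv_supNorm_sq (x : ℤ × ℤ) : (nsq x)⁻¹ ≤ ((supNorm x : ℝ) ^ 2)⁻¹ := by
  rcases (supNorm x).eq_zero_or_pos with h0 | hpos
  · obtain ⟨h₁, h₂⟩ : x.1 = 0 ∧ x.2 = 0 := by simpa [supNorm] using h0
    simp [nsq, h₁, h₂]
  · exact inv_anti₀ (by positivity) (supNorm_sq_le_nsq x)

lemma sum_inv_nsq_le_of_supNorm_eq {S : Finset (ℤ × ℤ)} {k : ℕ} (hS : ∀ x ∈ S, supNorm x = k) :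
    ∑ x ∈ S, (nsq x)⁻¹ ≤ 8 * (k : ℝ)⁻¹ := by
  have hterm : ∀ x ∈ S, (nsq x)⁻¹ ≤ ((k : ℝ) ^ 2)⁻¹ := fun x hx =>
    hS x hx ▸ inv_nsq_le_inv_supNorm_sq x
  refine (Finset.sum_le_card_nsmul _ _ _ hterm).trans ?_
  rw [nsmul_eq_mul]
  rcases k.eq_zero_or_pos with rfl | hk
  · simp
  have hcard : (#S : ℝ) ≤ 8 * k := by
    have hsub : S ⊆ Finset.box k := fun x hx => Int.mem_box.2 (hS x hx)
    exact_mod_cast (Finset.card_le_card hsub).trans (Int.card_box hk.ne').le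
  calc _ ≤ 8 * k * ((k : ℝ) ^ 2)⁻¹ := by gcongr
    _ = 8 * (k : ℝ)⁻¹ := by field_simp

lemma sum_inv_nsq_le_of_supNorm_le {S : Finset (ℤ × ℤ)} {N : ℕ}
    (hS : ∀ x ∈ S, supNorm x ≤ N) : ∑ x ∈ S, (nsq x)⁻¹ ≤ 8 * (1 + Real.log N) :=
  calc ∑ x ∈ S, (nsq x)⁻¹
      = ∑ k ∈ Finset.range (N + 1), ∑ x ∈ S with supNorm x = k, (nsq x)⁻¹ :=
        (Finset.sum_fiberwise_of_maps_to
          (fun x hx => Finset.mem_range_succ_iff.2 (hS x hx)) _).symm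
    _ ≤ ∑ k ∈ Finset.range (N + 1), 8 * (k : ℝ)⁻¹ := Finset.sum_le_sum fun k _ =>
        sum_inv_nsq_le_of_supNorm_eq fun x hx => (Finset.mem_filter.1 hx).2
    _ = 8 * harmonic N := by
        rw [← Finset.mul_sum, Finset.sum_range_succ', harmonic]
        push_cast
        simp
    _ ≤ 8 * (1 + Real.log N) := by gcongr; exact harmonic_le_one_add_log N

def polarTerm (T : ℝ) (η : ℤ × ℤ → ℝ) (f : ℝ → ℝ) (x : ℤ × ℤ) : ℝ :=
  if x ≠ 0 then η x * f (sig T x) / nsq x else 0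

section PolarIntegral

variable {T R : ℝ} {η : ℤ × ℤ → ℝ} {f g : ℝ → ℝ}

lemma polarTerm_eq_zero_of_rpow_lt (hT : 1 < T) (hf : ∀ s, R ≤ s → f s = 0) {x : ℤ × ℤ}
    (hx : T ^ R < supNorm x) : polarTerm T η f x = 0 := by
  have hTR : 0 < T ^ R := Real.rpow_pos_of_pos (by linarith) R
  have hlt : T ^ R < enorm2 x := hx.trans_le (supNorm_le_enorm2 x)
  have hsig : R < sig T x := by
    rw [sig, lt_div_iff₀ (Real.log_pos hT), ← Real.log_rpow (by linarith)]
    exact Real.log_lt_log hTR hlt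
  simp [polarTerm, hf _ hsig.le]

lemma polarInt_eq_sum (hT : 1 < T) (hf : ∀ s, R ≤ s → f s = 0) :
    polarInt T η f =
      1 / (2 * Real.pi * Real.log T) * ∑ x ∈ supBall ⌈T ^ R⌉₊, polarTerm T η f x := by
  refine congrArg (_ * ·) (tsum_eq_sum fun x hx => polarTerm_eq_zero_of_rpow_lt hT hf ?_)
  rw [mem_supBall, not_le] at hx
  exact (Nat.le_ceil _).trans_lt (by exact_mod_cast hx)

lemma polarInt_const_mul (a : ℝ) :
    polarInt T η (fun s => a * f s) = a * polarInt T η f := by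
  simp only [polarInt]
  rw [mul_left_comm a, ← tsum_mul_left (a := a)]
  congr 2 with x
  split_ifs <;> ring

lemma polarInt_sub (hT : 1 < T) (hf : ∀ s, R ≤ s → f s = 0) (hg : ∀ s, R ≤ s → g s = 0) :
    polarInt T η f - polarInt T η g = polarInt T η (f - g) := by
  have hfg : ∀ s, R ≤ s → (f - g) s = 0 := fun s hs => by simp [hf s hs, hg s hs]
  rw [polarInt_eq_sum hT hf, polarInt_eq_sum hT hg, polarInt_eq_sum hT hfg, ← mul_sub,
    ← Finset.sum_sub_distrib]
  congr 2 with x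
  simp only [polarTerm, Pi.sub_apply]
  split_ifs <;> ring

lemma integral_polarInt {μ : Measure ℝ} {G : ℝ → ℝ → ℝ} (hT : 1 < T)
    (hG : ∀ r s, R ≤ s → G r s = 0) (hGi : ∀ s, Integrable (fun r => G r s) μ) :
    ∫ r, polarInt T η (G r) ∂μ = polarInt T η (fun s => ∫ r, G r s ∂μ) := by
  have hterm : ∀ x, ∫ r, polarTerm T η (G r) x ∂μ = polarTerm T η (fun s => ∫ r, G r s ∂μ) x := by
    intro x
    by_cases hx : x = 0
    · simp [polarTerm, hx]
    · simp only [polarTerm, if_pos hx, integral_div, integral_const_mul]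
  simp_rw [polarInt_eq_sum (R := R) hT (hG _)]
  rw [polarInt_eq_sum (R := R) hT (fun s hs => by simp [hG _ s hs]), integral_const_mul,
    integral_finsetSum]
  · simp_rw [hterm]
  · intro x _
    by_cases hx : x = 0
    · simp [polarTerm, hx]
    · simpa [polarTerm, hx] using ((hGi (sig T x)).const_mul (η x)).div_const (nsq x)

-- At `x = 0` both sides vanish, as `(nsq 0)⁻¹ = 0`.
lemma abs_polarTerm_le {B : ℝ} (hη : ∀ x, |η x| ≤ 1) (hfB : ∀ s, |f s| ≤ B) (x : ℤ × ℤ) :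
    |polarTerm T η f x| ≤ B * (nsq x)⁻¹ := by
  by_cases hx : x = 0
  · simp [polarTerm, hx, nsq]
  rw [polarTerm, if_pos hx, abs_div, abs_of_nonneg (nsq_nonneg x), abs_mul, div_eq_mul_inv]
  exact mul_le_mul_of_nonneg_right ((mul_le_of_le_one_left (abs_nonneg _) (hη x)).trans (hfB _))
    (inv_nonneg.2 (nsq_nonneg x))

lemma abs_polarInt_le {B : ℝ} (hT : Real.exp 2 ≤ T) (hR : 0 ≤ R) (hη : ∀ x, |η x| ≤ 1)
    (hfB : ∀ s, |f s| ≤ B) (hf : ∀ s, R ≤ s → f s = 0) :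
    |polarInt T η f| ≤ 4 * (R + 1) / Real.pi * B := by
  have hT1 : 1 < T := (Real.one_lt_exp_iff.2 two_pos).trans_le hT
  have hlogT : 2 ≤ Real.log T := (Real.le_log_iff_exp_le (by linarith)).2 hT
  have hB : 0 ≤ B := (abs_nonneg _).trans (hfB 0)
  set N := ⌈T ^ R⌉₊
  have hTR : 1 ≤ T ^ R := Real.one_le_rpow hT1.le hR
  have hN : (N : ℝ) ≤ 2 * T ^ R := by linarith [Nat.ceil_lt_add_one (zero_le_one.trans hTR)]
  have hN0 : (0 : ℝ) < N := Nat.cast_pos.2 (Nat.ceil_pos.2 (by linarith))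
  have hlogN : 1 + Real.log N ≤ (R + 1) * Real.log T :=
    calc 1 + Real.log N ≤ 1 + (Real.log 2 + R * Real.log T) := by
          rw [← Real.log_rpow (by linarith), ← Real.log_mul two_ne_zero (by positivity)]
          gcongr
      _ ≤ (R + 1) * Real.log T := by nlinarith [Real.log_two_lt_d9]
  have hsum : |∑ x ∈ supBall N, polarTerm T η f x| ≤ B * (8 * ((R + 1) * Real.log T)) :=
    calc _ ≤ ∑ x ∈ supBall N, B * (nsq x)⁻¹ := (Finset.abs_sum_le_sum_abs _ _).trans
          (Finset.sum_le_sum fun x _ => abs_polarTerm_le hη hfB x)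
      _ = B * ∑ x ∈ supBall N, (nsq x)⁻¹ := (Finset.mul_sum _ _ _).symm
      _ ≤ B * (8 * (1 + Real.log N)) := by
          gcongr
          exact sum_inv_nsq_le_of_supNorm_le fun x hx => mem_supBall.1 hx
      _ ≤ B * (8 * ((R + 1) * Real.log T)) := by gcongr
  rw [polarInt_eq_sum hT1 hf, abs_mul, abs_of_pos (by positivity)]
  calc _ ≤ 1 / (2 * Real.pi * Real.log T) * (B * (8 * ((R + 1) * Real.log T))) := by gcongr
    _ = 4 * (R + 1) / Real.pi * B := by field_simp; ring

end PolarIntegral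

section ApproximateIdentity

variable {J ψ : ℝ → ℝ}

lemma hasCompactSupport_of_eq_zero_of_le_abs {c : ℝ} (hψ : ∀ s, c ≤ |s| → ψ s = 0) :
    HasCompactSupport ψ :=
  HasCompactSupport.intro (isCompact_closedBall 0 c) fun s hs => hψ s <| by
    rw [Metric.mem_closedBall, dist_zero_right, not_le] at hs
    exact hs.le

lemma abs_integral_sub_one_le_of_bump {δ : ℝ} (hδ : 0 < δ) (hδ1 : δ ≤ 1) (hψi : Integrable ψ)
    (hψ : ∀ s, 0 ≤ ψ s ∧ ψ s ≤ 1 / (2 * δ))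
    (hψ_top : ∀ s, |s| ≤ δ - δ ^ 2 → ψ s = 1 / (2 * δ))
    (hψ_zero : ∀ s, δ + δ ^ 2 ≤ |s| → ψ s = 0) :
    |(∫ s, ψ s) - 1| ≤ δ := by
  set c := δ + δ ^ 2 with hc_def
  set d := δ - δ ^ 2
  have hc : 0 ≤ c := by rw [hc_def]; positivity
  have hd : 0 ≤ d := by nlinarith
  have hupper : ∫ s, ψ s ≤ 1 + δ :=
    calc ∫ s, ψ s = ∫ s in Set.Icc (-c) c, ψ s := by
          refine (setIntegral_eq_integral_of_forall_compl_eq_zero fun s hs => hψ_zero s ?_).symm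
          rw [Set.mem_Icc, not_and_or, not_le, not_le] at hs
          rcases hs with hs | hs
          · linarith [neg_abs_le s]
          · linarith [le_abs_self s]
      _ ≤ ∫ _ in Set.Icc (-c) c, 1 / (2 * δ) :=
          setIntegral_mono_on hψi.integrableOn (integrableOn_const (by simp)) measurableSet_Icc
            fun s _ => (hψ s).2
      _ = 1 + δ := by
          rw [setIntegral_const, Real.volume_real_Icc_of_le (neg_le_self hc), smul_eq_mul]
          field_simp
          ring
  have hlower : 1 - δ ≤ ∫ s, ψ s :=
    calc 1 - δ = ∫ _ in Set.Icc (-d) d, 1 / (2 * δ) := by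
          rw [setIntegral_const, Real.volume_real_Icc_of_le (by linarith), smul_eq_mul]
          field_simp
          ring
      _ = ∫ s in Set.Icc (-d) d, ψ s :=
          setIntegral_congr_fun measurableSet_Icc fun s hs => (hψ_top s (abs_le.2 hs)).symm
      _ ≤ ∫ s, ψ s := setIntegral_le_integral hψi (.of_forall fun s => (hψ s).1)
  exact abs_le.2 ⟨by linarith, by linarith⟩

lemma abs_sub_integral_mul_comp_sub_le {K : NNReal} {M c θ : ℝ} (hJ : LipschitzWith K J)
    (hJM : ∀ x, |J x| ≤ M) (hψi : Integrable ψ) (hψ0 : ∀ s, 0 ≤ ψ s) (hc : 0 ≤ c)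
    (hψc : ∀ s, c ≤ |s| → ψ s = 0) (hθ : |(∫ s, ψ s) - 1| ≤ θ) (σ : ℝ) :
    |J σ - ∫ r, J r * ψ (σ - r)| ≤ M * θ + K * c * (1 + θ) := by
  have hshift : ∫ r, ψ (σ - r) = ∫ s, ψ s := integral_sub_left_eq_self ψ volume σ
  have hψσ : Integrable fun r => ψ (σ - r) := hψi.comp_sub_left σ
  have hJψ : Integrable fun r => J r * ψ (σ - r) :=
    hψσ.bdd_mul hJ.continuous.aestronglyMeasurable (.of_forall hJM)
  have hlocal : ∀ r, |J r - J σ| * ψ (σ - r) ≤ K * c * ψ (σ - r) := by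
    intro r
    rcases le_or_gt c |σ - r| with h | h
    · simp [hψc _ h]
    · refine mul_le_mul_of_nonneg_right ?_ (hψ0 _)
      calc |J r - J σ| ≤ K * |r - σ| := by simpa [Real.dist_eq] using hJ.dist_le_mul r σ
        _ ≤ K * c := by rw [abs_sub_comm]; gcongr
  have hsplit : J σ - ∫ r, J r * ψ (σ - r)
      = J σ * (1 - ∫ s, ψ s) - ∫ r, (J r - J σ) * ψ (σ - r) := by
    simp_rw [sub_mul]
    rw [integral_sub hJψ (hψσ.const_mul _), integral_const_mul, hshift]
    ring
  have hmain : |∫ r, (J r - J σ) * ψ (σ - r)| ≤ K * c * (1 + θ) :=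
    calc |∫ r, (J r - J σ) * ψ (σ - r)| ≤ ∫ r, K * c * ψ (σ - r) := by
          rw [← Real.norm_eq_abs]
          refine norm_integral_le_of_norm_le (hψσ.const_mul _) (.of_forall fun r => ?_)
          rw [Real.norm_eq_abs, abs_mul, abs_of_nonneg (hψ0 _)]
          exact hlocal r
      _ = K * c * ∫ s, ψ s := by rw [integral_const_mul, hshift]
      _ ≤ K * c * (1 + θ) := by gcongr; linarith [(abs_le.1 hθ).2]
  rw [hsplit]
  calc _ ≤ |J σ * (1 - ∫ s, ψ s)| + |∫ r, (J r - J σ) * ψ (σ - r)| := abs_sub _ _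
    _ ≤ M * θ + K * c * (1 + θ) := by
        rw [abs_mul, abs_sub_comm]
        gcongr
        exacts [(abs_nonneg _).trans (hJM σ), hJM σ]

lemma abs_sub_integral_mul_bump_le {K : NNReal} {M δ : ℝ} (hJ : LipschitzWith K J)
    (hJM : ∀ x, |J x| ≤ M) (hδ : 0 < δ) (hδ1 : δ ≤ 1) (hψc : Continuous ψ)
    (hψ : ∀ s, 0 ≤ ψ s ∧ ψ s ≤ 1 / (2 * δ))
    (hψ_top : ∀ s, |s| ≤ δ - δ ^ 2 → ψ s = 1 / (2 * δ))
    (hψ_zero : ∀ s, δ + δ ^ 2 ≤ |s| → ψ s = 0) (σ : ℝ) :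
    |J σ - ∫ r, J r * ψ (σ - r)| ≤ (M + 4 * K) * δ := by
  have hψi : Integrable ψ :=
    hψc.integrable_of_hasCompactSupport (hasCompactSupport_of_eq_zero_of_le_abs hψ_zero)
  calc _ ≤ M * δ + K * (δ + δ ^ 2) * (1 + δ) :=
        abs_sub_integral_mul_comp_sub_le hJ hJM hψi (fun s => (hψ s).1) (by positivity) hψ_zero
          (abs_integral_sub_one_le_of_bump hδ hδ1 hψi hψ hψ_top hψ_zero) σ
    _ ≤ (M + 4 * K) * δ := by
        have h : (1 + δ) ^ 2 ≤ 4 := by nlinarith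
        nlinarith [mul_le_mul_of_nonneg_left h (mul_nonneg K.coe_nonneg hδ.le)]

lemma HasCompactSupport.exists_nonneg_forall_lt_eq_zero (hJ : HasCompactSupport J) :
    ∃ b : ℝ, 0 ≤ b ∧ ∀ r, b < r → J r = 0 := by
  obtain ⟨b, hb⟩ := hJ.isCompact.bddAbove
  exact ⟨max b 0, le_max_right _ _, fun r hr => image_eq_zero_of_notMem_tsupport
    fun h => (hb h).not_gt ((le_max_left _ _).trans_lt hr)⟩

lemma mul_comp_sub_eq_zero {b c s : ℝ} (hJ : ∀ r, b < r → J r = 0)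
    (hψ : ∀ t, c ≤ |t| → ψ t = 0) (hs : b + c ≤ s) (r : ℝ) : J r * ψ (s - r) = 0 := by
  rcases lt_or_ge b r with h | h
  · simp [hJ r h]
  · simp [hψ _ ((by linarith : c ≤ s - r).trans (le_abs_self _))]

end ApproximateIdentity

/-- Introduction of an average through the approximation of the identity `ψ_{r,δ}`:
`∫ J dμ^{1,T}` differs from `∫ J(r) μ^{1,T}(ψ_{r,δ}) dr` by an error of order `δ`,
uniformly over the configurations, as `T → ∞`. The `limsup sup ≤ C₀δ` statement is
formulated with an arbitrary `ε > 0`, for all sufficiently small `δ > 0`. -/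
theorem stmt15 (J : ℝ → ℝ) (hJ : ContDiff ℝ 1 J)
    (hJc : HasCompactSupport J) (hJs : tsupport J ⊆ Set.Ioi 0) :
    ∃ C₀ : ℝ, ∃ δ₀ : ℝ, 0 < δ₀ ∧ ∀ δ : ℝ, 0 < δ → δ < δ₀ →
      ∀ ψ : ℝ → ℝ, Continuous ψ →
        (∀ s, 0 ≤ ψ s ∧ ψ s ≤ 1 / (2 * δ)) →
        (∀ s, |s| ≤ δ - δ ^ 2 → ψ s = 1 / (2 * δ)) →
        (∀ s, δ + δ ^ 2 ≤ |s| → ψ s = 0) →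
        ∀ ε : ℝ, 0 < ε → ∃ T₀ : ℝ, ∀ T : ℝ, T₀ ≤ T →
          ∀ η : ℤ × ℤ → ℝ, (∀ x, η x = 0 ∨ η x = 1) →
            |polarInt T η J
              - ∫ r in Set.Ioi (0:ℝ), J r * polarInt T η (fun s => ψ (s - r))|
              ≤ C₀ * δ + ε := by
  obtain ⟨K, hK⟩ := hJ.lipschitzWith_of_hasCompactSupport hJc one_ne_zero
  obtain ⟨M, hM⟩ := hJc.exists_bound_of_continuous hJ.continuous
  obtain ⟨b, hb0, hb⟩ := hJc.exists_nonneg_forall_lt_eq_zero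
  refine ⟨4 * (b + 2 + 1) / Real.pi * (M + 4 * K), 1, one_pos, ?_⟩
  intro δ hδ hδ1 ψ hψc hψ hψ_top hψ_zero ε hε
  set g := fun s => ∫ r in Set.Ioi 0, J r * ψ (s - r)
  have hJg : ∀ s, |J s - g s| ≤ (M + 4 * K) * δ := fun s => by
    simp only [g]
    rw [setIntegral_eq_integral_of_forall_compl_eq_zero fun r hr => by
      simp [image_eq_zero_of_notMem_tsupport fun h => hr (hJs h)]]
    exact abs_sub_integral_mul_bump_le hK (fun x => Real.norm_eq_abs (J x) ▸ hM x) hδ hδ1.le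
      hψc hψ hψ_top hψ_zero s
  have hvanish : ∀ r s, b + 2 ≤ s → J r * ψ (s - r) = 0 := fun r s hs =>
    mul_comp_sub_eq_zero hb (fun t ht => hψ_zero t (by nlinarith)) hs r
  refine ⟨Real.exp 2, fun T hT η hη => ?_⟩
  have hT1 : 1 < T := (Real.one_lt_exp_iff.2 two_pos).trans_le hT
  have hψi : Integrable ψ :=
    hψc.integrable_of_hasCompactSupport (hasCompactSupport_of_eq_zero_of_le_abs hψ_zero)
  have hswap : ∫ r in Set.Ioi 0, J r * polarInt T η (fun s => ψ (s - r)) = polarInt T η g := by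
    simp_rw [← polarInt_const_mul]
    exact integral_polarInt hT1 hvanish fun s =>
      ((hψi.comp_sub_left s).bdd_mul hJ.continuous.aestronglyMeasurable (.of_forall hM)).restrict
  rw [hswap, polarInt_sub (R := b + 2) hT1 (fun s hs => hb s (by linarith))
    (fun s hs => by simp [g, hvanish _ s hs])]
  calc _ ≤ 4 * (b + 2 + 1) / Real.pi * ((M + 4 * K) * δ) :=
        abs_polarInt_le hT (by linarith) (fun x => by rcases hη x with h | h <;> simp [h]) hJg
          fun s hs => by simp [g, hb s (by linarith), hvanish _ s hs]
    _ ≤ _ := by linarith
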